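/- arXiv:math/0612417 — 2 statements merged into one kernel-verified Lean document; each statement's English description precedes it below -/
import Mathlib

section
/- Let $k$ be an algebraically closed field of characteristic $p > 0$ and let $E$ be a 2-dimensional vector space over $k$. Then the image of the $p$-th power map $E \to S^p(E)$, $v \mapsto v^p$ (into the $p$-th symmetric power), spans a subspace of dimension 2, and this subspace is the kernel of the multiplication-derived surjection $S^p(E) \to \Sigma^{(p-1,1)}(E)$; in particular there is a short exact sequence of $k$-vector spaces $0 \to F^*E \to S^p(E) \to \Sigma^{(p-1,1)}(E) \to 0$, where $F^*E$ denotes the Frobenius twist of $E$. -/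
open MvPolynomial


section CLaux
open Finsupp

variable {k : Type} [Field k]

variable {k : Type} [Field k]

private lemma fin2_ext {d e : Fin 2 →₀ ℕ} (h0 : d 0 = e 0) (h1 : d 1 = e 1) : d = e := by
  ext a
  fin_cases a <;> assumption

private lemma fin2_degree (d : Fin 2 →₀ ℕ) : d.degree = d 0 + d 1 := by
  rw [Finsupp.degree_apply, Finset.sum_subset (Finset.subset_univ _)
    (fun x _ hx => Finsupp.notMem_support_iff.mp hx), Fin.sum_univ_two]

private lemma coeff_pderiv (i : Fin 2) (m : Fin 2 →₀ ℕ) (f : MvPolynomial (Fin 2) k) :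
    coeff m (pderiv i f) = ((m i : k) + 1) * coeff (m + Finsupp.single i 1) f := by
  induction f using MvPolynomial.induction_on' with
  | add f g hf hg => simp [hf, hg, mul_add]
  | monomial s a =>
    rw [pderiv_monomial, coeff_monomial, coeff_monomial]
    by_cases h : s = m + Finsupp.single i 1
    · subst h
      rw [if_pos (add_tsub_cancel_right _ _), if_pos rfl]
      simp [Finsupp.add_apply, Finsupp.single_eq_same]
      ring
    · rw [if_neg h, mul_zero]
      by_cases h2 : s - Finsupp.single i 1 = m
      · by_cases h3 : s i = 0
        · simp [h3]
        · exfalso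
          apply h
          rw [← h2, tsub_add_cancel_of_le]
          exact Finsupp.single_le_iff.mpr (Nat.one_le_iff_ne_zero.mpr h3)
      · rw [if_neg h2]

private lemma coeff_phi (m : Fin 2 →₀ ℕ) (f : MvPolynomial (Fin 2) k) :
    coeff m (pderiv (0 : Fin 2) (pderiv (1 : Fin 2) f)) =
      ((m 0 : k) + 1) * (((m 1 : k) + 1) *
        coeff (m + Finsupp.single 0 1 + Finsupp.single 1 1) f) := by
  rw [_root_.coeff_pderiv, _root_.coeff_pderiv]
  simp [Finsupp.add_apply, Finsupp.single_apply]

private lemma deg_one_decomp (v : MvPolynomial (Fin 2) k) (hv : v.IsHomogeneous 1) :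
    v = coeff (Finsupp.single 0 1) v • X 0 + coeff (Finsupp.single 1 1) v • X 1 := by
  classical
  ext d
  rw [coeff_add, coeff_smul, coeff_smul, coeff_X', coeff_X']
  by_cases h0 : Finsupp.single (0 : Fin 2) 1 = d
  · have : ¬ (Finsupp.single (1 : Fin 2) 1 = d) := by
      rw [← h0]; intro h
      have := DFunLike.congr_fun h (0 : Fin 2)
      simp [Finsupp.single_apply] at this
    rw [if_pos h0, if_neg this, ← h0]
    simp
  · by_cases h1 : Finsupp.single (1 : Fin 2) 1 = d
    · rw [if_neg h0, if_pos h1, ← h1]; simp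
    · rw [if_neg h0, if_neg h1]
      simp only [smul_eq_mul, mul_zero, add_zero]
      by_contra hc
      have hdeg := hv hc
      rw [show (weight 1 : (Fin 2 →₀ ℕ) →+ ℕ) = weight (fun _ => 1) from rfl, ← degree_eq_weight_one, fin2_degree] at hdeg
      rcases Nat.eq_zero_or_pos (d 0) with h | h
      · exact h1 (fin2_ext (by simp [Finsupp.single_apply, h]) (by simp; omega)).symm
      · exact h0 (fin2_ext (by simp; omega) (by simp [Finsupp.single_apply]; omega)).symm

variable (p : ℕ) [Fact p.Prime] [CharP k p]

private lemma frob_span :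
    Submodule.span k {w : MvPolynomial (Fin 2) k |
        ∃ v ∈ homogeneousSubmodule (Fin 2) k 1, w = v ^ p} =
      Submodule.span k {X 0 ^ p, X 1 ^ p} := by
  apply le_antisymm
  · rw [Submodule.span_le]
    rintro w ⟨v, hv, rfl⟩
    rw [deg_one_decomp v hv]
    have hchar : CharP (MvPolynomial (Fin 2) k) p := inferInstance
    rw [add_pow_char, smul_pow, smul_pow]
    exact Submodule.add_mem _
      (Submodule.smul_mem _ _ (Submodule.subset_span (by left; rfl)))
      (Submodule.smul_mem _ _ (Submodule.subset_span (by right; rfl)))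
  · rw [Submodule.span_le]
    rintro w (rfl | rfl)
    · exact Submodule.subset_span ⟨X 0, isHomogeneous_X k 0, rfl⟩
    · exact Submodule.subset_span ⟨X 1, isHomogeneous_X k 1, rfl⟩

private lemma single_ne (hp : p ≠ 0) :
    Finsupp.single (0 : Fin 2) p ≠ Finsupp.single (1 : Fin 2) p := by
  intro h
  have := DFunLike.congr_fun h (0 : Fin 2)
  simp [Finsupp.single_apply] at this
  exact hp this

private lemma frob_rank :
    Module.finrank k (Submodule.span k {X 0 ^ p, X 1 ^ p} :
      Submodule k (MvPolynomial (Fin 2) k)) = 2 := by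
  have hp : p ≠ 0 := (Fact.out : p.Prime).ne_zero
  have hrange : Set.range ![(X 0 : MvPolynomial (Fin 2) k) ^ p, X 1 ^ p]
      = {X 0 ^ p, X 1 ^ p} := by
    ext w
    simp [Fin.exists_fin_two]
    tauto
  have hli : LinearIndependent k ![(X 0 : MvPolynomial (Fin 2) k) ^ p, X 1 ^ p] := by
    rw [LinearIndependent.pair_iff]
    intro s t hst
    have h0 := congrArg (coeff (Finsupp.single (0 : Fin 2) p)) hst
    have h1 := congrArg (coeff (Finsupp.single (1 : Fin 2) p)) hst
    rw [coeff_add, coeff_smul, coeff_smul, X_pow_eq_monomial, X_pow_eq_monomial,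
      coeff_monomial, coeff_monomial] at h0 h1
    rw [if_pos rfl, if_neg (single_ne p hp).symm] at h0
    rw [if_neg (single_ne p hp), if_pos rfl] at h1
    simpa using And.intro h0 h1
  rw [← hrange, finrank_span_eq_card hli, Fintype.card_fin]

set_option linter.unusedSectionVars false

private lemma phi_zero_on_span (f : MvPolynomial (Fin 2) k)
    (hf : f ∈ Submodule.span k {(X 0 : MvPolynomial (Fin 2) k) ^ p, X 1 ^ p}) :
    pderiv (0 : Fin 2) (pderiv (1 : Fin 2) f) = 0 := by
  induction hf using Submodule.span_induction with
  | mem w hw =>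
    rcases hw with rfl | rfl
    · rw [X_pow_eq_monomial]
      simp [pderiv_monomial, Finsupp.single_apply]
    · rw [X_pow_eq_monomial]
      simp [pderiv_monomial, Finsupp.single_apply, CharP.cast_eq_zero]
  | zero => simp
  | add x y _ _ hx hy => simp [hx, hy]
  | smul a x _ hx => simp [hx]

private lemma cast_ne_zero_of_lt {n : ℕ} (h0 : 0 < n) (h1 : n < p) : (n : k) ≠ 0 := by
  intro h
  rcases (CharP.cast_eq_zero_iff k p n).mp h with hd
  have := Nat.le_of_dvd h0 hd
  omega

private lemma kernel_mem (f : MvPolynomial (Fin 2) k) (hf : f.IsHomogeneous p)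
    (hker : pderiv (0 : Fin 2) (pderiv (1 : Fin 2) f) = 0) :
    f ∈ Submodule.span k {(X 0 : MvPolynomial (Fin 2) k) ^ p, X 1 ^ p} := by
  have hp : p ≠ 0 := (Fact.out : p.Prime).ne_zero
  have key : f = coeff (Finsupp.single 0 p) f • X 0 ^ p
      + coeff (Finsupp.single 1 p) f • X 1 ^ p := by
    ext d
    rw [coeff_add, coeff_smul, coeff_smul, X_pow_eq_monomial, X_pow_eq_monomial,
      coeff_monomial, coeff_monomial]
    by_cases h0 : Finsupp.single (0 : Fin 2) p = d
    · rw [if_pos h0, if_neg (h0 ▸ (single_ne p hp).symm), ← h0]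
      simp
    · by_cases h1 : Finsupp.single (1 : Fin 2) p = d
      · rw [if_neg h0, if_pos h1, ← h1]; simp
      · rw [if_neg h0, if_neg h1]
        simp only [smul_eq_mul, mul_zero, add_zero]
        by_contra hc
        have hdeg := hf hc
        rw [show (weight 1 : (Fin 2 →₀ ℕ) →+ ℕ) = weight (fun _ => 1) from rfl, ← degree_eq_weight_one, fin2_degree] at hdeg
        -- rule out extreme cases
        have hd0 : 0 < d 0 := by
          rcases Nat.eq_zero_or_pos (d 0) with h | h
          · exact absurd (fin2_ext (by simp [Finsupp.single_apply, h])
              (by simp; omega)).symm h1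
          · exact h
        have hd1 : 0 < d 1 := by
          rcases Nat.eq_zero_or_pos (d 1) with h | h
          · exact absurd (fin2_ext (by simp; omega)
              (by simp [Finsupp.single_apply, h])).symm h0
          · exact h
        set m : Fin 2 →₀ ℕ := Finsupp.single 0 (d 0 - 1) + Finsupp.single 1 (d 1 - 1) with hm
        have hm0 : m 0 = d 0 - 1 := by simp [hm, Finsupp.single_apply]
        have hm1 : m 1 = d 1 - 1 := by simp [hm, Finsupp.single_apply]
        have hmd : m + Finsupp.single 0 1 + Finsupp.single 1 1 = d := by
          apply fin2_ext <;> simp [hm0, hm1, Finsupp.add_apply, Finsupp.single_apply] <;> omega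
        have := coeff_phi m f
        rw [hker, hmd, coeff_zero] at this
        have e0 : ((m 0 : k) + 1) = ((d 0 : ℕ) : k) := by
          rw [hm0, Nat.cast_sub hd0]; push_cast; ring
        have e1 : ((m 1 : k) + 1) = ((d 1 : ℕ) : k) := by
          rw [hm1, Nat.cast_sub hd1]; push_cast; ring
        rw [e0, e1] at this
        have n0 : ((d 0 : ℕ) : k) ≠ 0 := cast_ne_zero_of_lt p hd0 (by omega)
        have n1 : ((d 1 : ℕ) : k) ≠ 0 := cast_ne_zero_of_lt p hd1 (by omega)
        rcases mul_eq_zero.mp this.symm with h | h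
        · exact n0 h
        rcases mul_eq_zero.mp h with h | h
        · exact n1 h
        · exact hc h
  rw [key]
  exact Submodule.add_mem _
    (Submodule.smul_mem _ _ (Submodule.subset_span (by left; rfl)))
    (Submodule.smul_mem _ _ (Submodule.subset_span (by right; rfl)))

private lemma surj (g : MvPolynomial (Fin 2) k) (hg : g.IsHomogeneous (p - 2)) :
    ∃ f ∈ homogeneousSubmodule (Fin 2) k p,
      pderiv (0 : Fin 2) (pderiv (1 : Fin 2) f) = g := by
  have hp2 : 2 ≤ p := (Fact.out : p.Prime).two_le
  set f : MvPolynomial (Fin 2) k := ∑ d ∈ g.support,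
    monomial (d + Finsupp.single 0 1 + Finsupp.single 1 1)
      (((((d 0 + 1) * (d 1 + 1) : ℕ) : k))⁻¹ * coeff d g) with hfdef
  have hdeg : ∀ d ∈ g.support, d 0 + d 1 = p - 2 := by
    intro d hd
    have := hg (MvPolynomial.mem_support_iff.mp hd)
    rw [show (weight 1 : (Fin 2 →₀ ℕ) →+ ℕ) = weight (fun _ => 1) from rfl, ← degree_eq_weight_one, fin2_degree] at this
    exact this
  refine ⟨f, ?_, ?_⟩
  · rw [mem_homogeneousSubmodule, hfdef]
    apply MvPolynomial.IsHomogeneous.sum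
    intro d hd
    apply isHomogeneous_monomial
    rw [fin2_degree]
    have := hdeg d hd
    simp only [Finsupp.add_apply, Finsupp.single_apply]
    norm_num
    omega
  · rw [hfdef, map_sum, map_sum]
    have : ∀ d ∈ g.support,
        pderiv (0 : Fin 2) (pderiv (1 : Fin 2)
          (monomial (d + Finsupp.single 0 1 + Finsupp.single 1 1)
            (((((d 0 + 1) * (d 1 + 1) : ℕ) : k))⁻¹ * coeff d g)))
        = monomial d (coeff d g) := by
      intro d hd
      have hsub1 : (d + Finsupp.single (0 : Fin 2) 1 + Finsupp.single 1 1)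
          - Finsupp.single 1 1 = d + Finsupp.single 0 1 := add_tsub_cancel_right _ _
      rw [pderiv_monomial, hsub1, pderiv_monomial, add_tsub_cancel_right]
      congr 1
      have hv1 : (d + Finsupp.single (0 : Fin 2) 1 + Finsupp.single 1 1 : Fin 2 →₀ ℕ) 1 = d 1 + 1 := by
        simp [Finsupp.add_apply, Finsupp.single_apply]
      have hv0 : (d + Finsupp.single (0 : Fin 2) 1 : Fin 2 →₀ ℕ) 0 = d 0 + 1 := by
        simp [Finsupp.add_apply, Finsupp.single_apply]
      rw [hv1, hv0]
      have hD := hdeg d hd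
      have n0 : (((d 0 + 1 : ℕ)) : k) ≠ 0 := cast_ne_zero_of_lt p (by omega) (by omega)
      have n1 : (((d 1 + 1 : ℕ)) : k) ≠ 0 := cast_ne_zero_of_lt p (by omega) (by omega)
      push_cast
      push_cast at n0 n1
      field_simp
    rw [Finset.sum_congr rfl this, support_sum_monomial_coeff]

end CLaux

/-- Carter–Lusztig short exact sequence in rank 2 (STATEMENT 0).
We model the 2-dimensional vector space `E` as the space of homogeneous degree-1
polynomials in `k[x₀,x₁]`, so that `Sᵈ(E)` is the space of homogeneous degree-`d`
polynomials, and `Σ^{(p-1,1)}(E) ≅ S^{p-2}(E) ⊗ ∧²E ≅ S^{p-2}(E)` via the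
trivialization `e₁ ∧ e₂ ↦ 1`.  The multiplication-derived surjection
`S^p(E) → Σ^{(p-1,1)}(E)` is the contraction `f ↦ ∂₀∂₁ f`.
The claims: the span of the `p`-th powers of degree-1 elements is 2-dimensional,
it is exactly the kernel of the contraction on `S^p(E)`, and the contraction is
surjective onto `S^{p-2}(E)`; together these give the short exact sequence
`0 → F^*E → S^p(E) → Σ^{(p-1,1)}(E) → 0`. -/
theorem carter_lusztig_rank_two_ses
    (k : Type) [Field k] [IsAlgClosed k] (p : ℕ) [Fact p.Prime] [CharP k p]
    (S : ℕ → Submodule k (MvPolynomial (Fin 2) k))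
    (hS : S = fun d => homogeneousSubmodule (Fin 2) k d)
    (φ : MvPolynomial (Fin 2) k → MvPolynomial (Fin 2) k)
    (hφ : φ = fun f => pderiv (0 : Fin 2) (pderiv (1 : Fin 2) f))
    (FrobImage : Submodule k (MvPolynomial (Fin 2) k))
    (hFrob : FrobImage = Submodule.span k {w | ∃ v ∈ S 1, w = v ^ p}) :
    Module.finrank k FrobImage = 2 ∧
    (∀ f ∈ S p, (φ f = 0 ↔ f ∈ FrobImage)) ∧
    (∀ g ∈ S (p - 2), ∃ f ∈ S p, φ f = g) := by
  subst hS hφ hFrob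
  have hsets : {w : MvPolynomial (Fin 2) k |
      ∃ v ∈ (fun d => homogeneousSubmodule (Fin 2) k d) 1, w = v ^ p} =
      {w : MvPolynomial (Fin 2) k | ∃ v ∈ homogeneousSubmodule (Fin 2) k 1, w = v ^ p} := rfl
  refine ⟨?_, ?_, ?_⟩
  · rw [hsets, frob_span, frob_rank]
  · intro f hf
    constructor
    · intro h
      rw [hsets, frob_span]
      exact kernel_mem p f hf h
    · intro h
      rw [hsets, frob_span] at h
      exact phi_zero_on_span p f h
  · intro g hg
    exact surj p g hg
end

section
/- Let $A$ and $B$ be rings, $f: A \to B$ a ring homomorphism making $B$ a finitely generated projective $A$-module, and set $\omega = \mathrm{Hom}_A(B, A)$ viewed as a $B$-module. Then for every $A$-module $M$ there is a natural isomorphism of $B$-modules $\mathrm{Hom}_A(B, M) \cong \omega \otimes_B (B \otimes_A M)$ when $\omega$ is an invertible $B$-module; i.e., the right adjoint $f^!$ of the forgetful (pushforward) functor is given by $f^!M = f^*M \otimes_B \omega$. -/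
open TensorProduct

/-- For an `A`-algebra `B` and an `A`-module `M`, the `B`-module structure on
`Hom_A(B, M)` given by `(b • φ)(x) = φ(b * x)`. -/
noncomputable def homFrobModule (A B M : Type) [CommRing A] [CommRing B] [Algebra A B]
    [AddCommGroup M] [Module A M] : Module B (B →ₗ[A] M) where
  smul b φ := φ.comp (LinearMap.mul A B b)
  one_smul φ := by ext x; show φ (1 * x) = φ x; rw [one_mul]
  mul_smul b c φ := by
    ext x
    show φ (b * c * x) = φ (c * (b * x))
    rw [← mul_assoc, mul_comm c b]
  smul_zero b := by ext x; rfl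
  smul_add b φ ψ := by ext x; rfl
  add_smul b c φ := by ext x; show φ ((b + c) * x) = φ (b * x) + φ (c * x); rw [add_mul, map_add]
  zero_smul φ := by ext x; show φ (0 * x) = 0; rw [zero_mul, map_zero]


/-!
Cancelling the base change gives `ω ⊗_B (B ⊗_A M) ≅ ω ⊗_A M`, and since `B` is finite projective
over `A`, the evaluation map `φ ⊗ m ↦ (x ↦ φ x • m)` identifies `ω ⊗_A M` with `Hom_A(B, M)`.
Both identifications are `B`-linear for the actions `(b • φ) x = φ (b * x)`.
-/

namespace homFrobModule

attribute [local instance] homFrobModule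

variable {A B M : Type} [CommRing A] [CommRing B] [Algebra A B] [AddCommGroup M] [Module A M]

theorem smul_apply (b : B) (φ : B →ₗ[A] M) (x : B) : (b • φ) x = φ (b * x) := rfl

instance : IsScalarTower A B (B →ₗ[A] M) where
  smul_assoc a b φ := by
    ext x
    simp only [smul_apply, LinearMap.smul_apply, smul_mul_assoc, map_smul]

variable (A B M)

theorem dualTensorHom_smul (b : B) (t : Module.Dual A B ⊗[A] M) :
    dualTensorHom A B M (b • t) = b • dualTensorHom A B M t := by
  induction t with
  | zero => simp only [smul_zero, map_zero]
  | tmul φ m =>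
    ext x
    simp only [TensorProduct.smul_tmul', dualTensorHom_apply, smul_apply]
  | add t s ht hs => simp only [smul_add, map_add, ht, hs]

noncomputable def dualTensorEquiv [Module.Projective A B] [Module.Finite A B] :
    Module.Dual A B ⊗[A] M ≃ₗ[B] (B →ₗ[A] M) :=
  .ofBijective
    { toFun := dualTensorHom A B M
      map_add' := map_add _
      map_smul' := dualTensorHom_smul A B M }
    dualTensorHom_bijective

end homFrobModule

/-- Module-theoretic duality for a finite flat morphism: if `B` is a
finitely generated projective `A`-module and `ω = Hom_A(B, A)` (with the
`B`-module structure above) is an invertible `B`-module, then for every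
`A`-module `M` there is a `B`-module isomorphism
`Hom_A(B, M) ≅ ω ⊗_B (B ⊗_A M)`, i.e. `f^! M = f^* M ⊗ ω`. -/
theorem finite_flat_duality_affine
    (A B : Type) [CommRing A] [CommRing B] [Algebra A B]
    (hproj : Module.Projective A B) (hfin : Module.Finite A B) :
    letI : Module B (B →ₗ[A] A) := homFrobModule A B A
    -- `ω = Hom_A(B, A)` is invertible as a `B`-module
    (∃ (ω' : Type) (_ : AddCommGroup ω') (_ : Module B ω'),
        Nonempty ((B →ₗ[A] A) ⊗[B] ω' ≃ₗ[B] B)) →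
    ∀ (M : Type) (_ : AddCommGroup M) (_ : Module A M),
      letI : Module B (B →ₗ[A] M) := homFrobModule A B M
      Nonempty ((B →ₗ[A] M) ≃ₗ[B] (B →ₗ[A] A) ⊗[B] (B ⊗[A] M)) := by
  intro _ M _ _
  let _ := homFrobModule A B A
  let _ := homFrobModule A B M
  exact ⟨(homFrobModule.dualTensorEquiv A B M).symm ≪≫ₗ
    (TensorProduct.AlgebraTensorModule.cancelBaseChange A B B (B →ₗ[A] A) M).symm⟩
end
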